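/- Let 0 < α < N and 1 < s < N/α. Let (g_n) ⊂ L^1(ℝ^N) ∩ L^s(ℝ^N) be bounded in both L^1(ℝ^N) and L^s(ℝ^N), and assume that for every bounded domain Ω ⊂ ℝ^N, g_n → 0 strongly in L^s(Ω) (up to a subsequence). Then, passing to a further subsequence, (I_α ∗ g_n)(x) → 0 for almost every x ∈ ℝ^N. -/

import Mathlib

open MeasureTheory Real Filter Topology Asymptotics Bornology
open scoped ENNReal RealInnerProductSpace

noncomputable section

abbrev Euc (N : ℕ) := EuclideanSpace ℝ (Fin N)

/-- Normalization constant of the Riesz potential. -/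
def rieszA (N : ℕ) (α : ℝ) : ℝ :=
  Real.Gamma (((N : ℝ) - α) / 2) / (Real.Gamma (α / 2) * Real.pi ^ ((N : ℝ) / 2) * 2 ^ α)

/-- Riesz potential convolution `I_α ∗ g`. -/
def riesz (N : ℕ) (α : ℝ) (g : Euc N → ℝ) (x : Euc N) : ℝ :=
  rieszA N α * ∫ y : Euc N, g y / ‖x - y‖ ^ ((N : ℝ) - α)

/-- Membership in `H¹(ℝ^N)`. -/
def MemH1 {N : ℕ} (u : Euc N → ℝ) : Prop :=
  MemLp u 2 volume ∧ MemLp (fun x => ‖gradient u x‖) 2 volume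

/-- Smooth compactly supported test functions. -/
def IsTest {N : ℕ} (φ : Euc N → ℝ) : Prop := ContDiff ℝ (⊤ : ℕ∞) φ ∧ HasCompactSupport φ

/-- Primitive `F(t) = ∫₀ᵗ f`. -/
def Fprim (f : ℝ → ℝ) (t : ℝ) : ℝ := ∫ s in (0:ℝ)..t, f s

section AuxLemmas
open Metric Set

lemma exists_ofReal_mul_lt (c ε : ℝ≥0∞) (hc : c ≠ ⊤) (hε : 0 < ε) :
    ∃ δ : ℝ, 0 < δ ∧ ENNReal.ofReal δ * c < ε := by
  rcases eq_or_ne c 0 with h0 | h0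
  · exact ⟨1, one_pos, by simp [h0, hε]⟩
  rcases eq_or_ne ε ⊤ with htop | htop
  · refine ⟨1, one_pos, ?_⟩
    rw [htop]
    exact (ENNReal.mul_lt_top (by simp) hc.lt_top)
  set b : ℝ≥0∞ := ε / 2 / c with hb_def
  have hb0 : b ≠ 0 := by
    simp only [hb_def, ne_eq, ENNReal.div_eq_zero_iff, not_or]
    refine ⟨⟨?_, ?_⟩, hc⟩
    · simp [hε.ne']
    · simp
  have hbtop : b ≠ ⊤ := by
    rw [hb_def]
    intro h
    rw [ENNReal.div_eq_top] at h
    rcases h with ⟨h1, h2⟩ | ⟨h1, h2⟩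
    · exact h0 h2
    · rw [ENNReal.div_eq_top] at h1
      rcases h1 with ⟨_, h⟩ | ⟨h, _⟩
      · norm_num at h
      · exact htop h
  refine ⟨b.toReal, ENNReal.toReal_pos hb0 hbtop, ?_⟩
  rw [ENNReal.ofReal_toReal hbtop, hb_def, ENNReal.div_mul_cancel h0 hc]
  exact ENNReal.half_lt_self hε.ne' htop

lemma ker_translate {N : ℕ} (α : ℝ) (y : Euc N) (ε : ℝ) :
    ∫⁻ x in Metric.ball y ε, ENNReal.ofReal (‖x - y‖ ^ (α - (N:ℝ))) =
      ∫⁻ z in Metric.ball (0:Euc N) ε, ENNReal.ofReal (‖z‖ ^ (α - (N:ℝ))) := by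
  have hemb : MeasurableEmbedding (fun z : Euc N => z + y) :=
    (Homeomorph.addRight y).measurableEmbedding
  have h := (measurePreserving_add_right (volume : Measure (Euc N)) y).setLIntegral_comp_preimage_emb
    hemb (fun x => ENNReal.ofReal (‖x - y‖ ^ (α - (N:ℝ)))) (Metric.ball y ε)
  have hpre : (fun z : Euc N => z + y) ⁻¹' Metric.ball y ε = Metric.ball (0:Euc N) ε := by
    ext z
    simp [Metric.mem_ball, dist_eq_norm]
  rw [hpre] at h
  rw [← h]
  simp

lemma ker_ball {N : ℕ} (hN : 1 ≤ N) {α : ℝ} (hα0 : 0 < α) (hαN : α < N) :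
    ∃ C : ℝ≥0∞, C ≠ ⊤ ∧ ∀ ε : ℝ, 0 < ε →
      ∫⁻ z in Metric.ball (0 : Euc N) ε, ENNReal.ofReal (‖z‖ ^ (α - (N:ℝ)))
        ≤ ENNReal.ofReal (ε ^ α) * C := by
  haveI : Nonempty (Fin N) := ⟨⟨0, hN⟩⟩
  set q : ℝ≥0∞ := ENNReal.ofReal ((2:ℝ) ^ (-α)) with hq_def
  have hq1 : q < 1 := by
    rw [hq_def, ← ENNReal.ofReal_one]
    exact (ENNReal.ofReal_lt_ofReal_iff one_pos).mpr
      (Real.rpow_lt_one_of_one_lt_of_neg one_lt_two (neg_neg_iff_pos.mpr hα0))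
  set c : ℝ≥0∞ := volume (Metric.ball (0 : Euc N) 1) with hc_def
  have hc_top : c ≠ ⊤ := measure_ball_lt_top.ne
  refine ⟨ENNReal.ofReal ((2:ℝ) ^ (N:ℝ)) * (1 - q)⁻¹ * c, ?_, ?_⟩
  · exact ENNReal.mul_ne_top (ENNReal.mul_ne_top ENNReal.ofReal_ne_top
      (ENNReal.inv_ne_top.mpr (tsub_pos_of_lt hq1).ne')) hc_top
  intro ε hε
  set A : ℕ → Set (Euc N) := fun k =>
    Metric.ball 0 (ε / 2 ^ k) \ Metric.ball 0 (ε / 2 ^ (k + 1)) with hA_def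
  have hcover : Metric.ball (0 : Euc N) ε ⊆ {0} ∪ ⋃ k, A k := by
    intro z hz
    rcases eq_or_ne z 0 with h | h
    · exact Or.inl h
    have hz0 : 0 < ‖z‖ := norm_pos_iff.mpr h
    have hex : ∃ k : ℕ, ε / 2 ^ (k + 1) ≤ ‖z‖ := by
      obtain ⟨m, hm⟩ := pow_unbounded_of_one_lt (ε / ‖z‖) (one_lt_two (α := ℝ))
      refine ⟨m, ?_⟩
      have h2 : (0:ℝ) < 2 ^ (m+1) := by positivity
      rw [div_le_iff₀ h2]
      have : ε / ‖z‖ < 2 ^ (m+1) :=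
        hm.trans_le (pow_le_pow_right₀ one_le_two (Nat.le_succ m))
      calc ε = (ε / ‖z‖) * ‖z‖ := by field_simp
        _ ≤ 2 ^ (m+1) * ‖z‖ := by nlinarith [this, hz0]
        _ = ‖z‖ * 2 ^ (m+1) := by ring
    right
    refine mem_iUnion.mpr ⟨Nat.find hex, ?_, ?_⟩
    · rw [mem_ball_zero_iff]
      rcases Nat.eq_zero_or_pos (Nat.find hex) with h0 | hpos
      · rw [h0]; simpa using mem_ball_zero_iff.mp hz
      · obtain ⟨j, hj⟩ := Nat.exists_eq_succ_of_ne_zero hpos.ne'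
        rw [hj]
        have := Nat.find_min hex (by omega : j < Nat.find hex)
        push_neg at this
        simpa [Nat.succ_eq_add_one] using this
    · intro hmem
      exact absurd (mem_ball_zero_iff.mp hmem) (not_lt.mpr (Nat.find_spec hex))
  have hannulus : ∀ k : ℕ, ∫⁻ z in A k, ENNReal.ofReal (‖z‖ ^ (α - (N:ℝ)))
      ≤ (ENNReal.ofReal (ε ^ α) * ENNReal.ofReal ((2:ℝ) ^ (N:ℝ)) * c) * q ^ k := by
    intro k
    set a : ℝ := ε / 2 ^ (k + 1) with ha_def
    have ha : 0 < a := by positivity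
    have h2a : ε / 2 ^ k = 2 * a := by
      rw [ha_def, pow_succ]; field_simp
    have hAmeas : MeasurableSet (A k) :=
      measurableSet_ball.diff measurableSet_ball
    have hbound : ∀ z ∈ A k, ENNReal.ofReal (‖z‖ ^ (α - (N:ℝ)))
        ≤ ENNReal.ofReal (a ^ (α - (N:ℝ))) := by
      intro z hz
      have h1 : a ≤ ‖z‖ := not_lt.mp (fun hlt => hz.2 (mem_ball_zero_iff.mpr hlt))
      exact ENNReal.ofReal_le_ofReal
        (Real.rpow_le_rpow_of_nonpos ha h1 (by linarith))
    calc ∫⁻ z in A k, ENNReal.ofReal (‖z‖ ^ (α - (N:ℝ)))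
        ≤ ∫⁻ _ in A k, ENNReal.ofReal (a ^ (α - (N:ℝ))) :=
          setLIntegral_mono' hAmeas hbound
      _ = ENNReal.ofReal (a ^ (α - (N:ℝ))) * volume (A k) := setLIntegral_const _ _
      _ ≤ ENNReal.ofReal (a ^ (α - (N:ℝ))) * volume (Metric.ball (0:Euc N) (ε / 2 ^ k)) := by
          gcongr; exact diff_subset
      _ = ENNReal.ofReal (a ^ (α - (N:ℝ))) * (ENNReal.ofReal ((ε / 2 ^ k) ^ (Module.finrank ℝ (Euc N))) * c) := by
          rw [Measure.addHaar_ball _ _ (by positivity)]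
      _ = ENNReal.ofReal (a ^ (α - (N:ℝ)) * (2*a) ^ (N:ℕ)) * c := by
          rw [finrank_euclideanSpace_fin, h2a, ← mul_assoc,
            ← ENNReal.ofReal_mul (by positivity)]
      _ ≤ ENNReal.ofReal (ε ^ α * (2:ℝ) ^ (N:ℝ) * ((2:ℝ) ^ (-α)) ^ k) * c := by
          refine mul_le_mul_left (ENNReal.ofReal_le_ofReal ?_) c
          have h2neg : (0:ℝ) < (2:ℝ) ^ (-α) := Real.rpow_pos_of_pos two_pos _
          have key : a ^ (α - (N:ℝ)) * (2*a) ^ (N:ℕ)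
              = ε ^ α * (2:ℝ) ^ (N:ℝ) * ((2:ℝ) ^ (-α)) ^ (k+1) := by
            have e1 : ((2:ℝ)*a) ^ (N:ℕ) = ((2:ℝ)*a) ^ ((N:ℕ):ℝ) := (Real.rpow_natCast _ _).symm
            have e2 : ((2:ℝ)*a) ^ ((N:ℕ):ℝ) = (2:ℝ) ^ ((N:ℕ):ℝ) * a ^ ((N:ℕ):ℝ) :=
              Real.mul_rpow (by norm_num) ha.le
            have e3 : a ^ (α - (N:ℝ)) * a ^ ((N:ℕ):ℝ) = a ^ α := by
              rw [← Real.rpow_add ha]; ring_nf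
            have e4 : a ^ α = ε ^ α * ((2:ℝ) ^ (-α)) ^ (k+1) := by
              rw [ha_def, Real.div_rpow hε.le (by positivity)]
              have : ((2:ℝ) ^ (-α)) ^ (k+1) = ((2:ℝ) ^ (k+1) : ℝ) ^ (-α) := by
                rw [← Real.rpow_natCast ((2:ℝ) ^ (-α)) (k+1),
                  ← Real.rpow_natCast (2:ℝ) (k+1),
                  ← Real.rpow_mul (by norm_num), ← Real.rpow_mul (by norm_num)]
                ring_nf
              rw [this, Real.rpow_neg (by positivity), div_eq_mul_inv]
            rw [e1, e2]
            calc a ^ (α - (N:ℝ)) * ((2:ℝ) ^ ((N:ℕ):ℝ) * a ^ ((N:ℕ):ℝ))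
                = (2:ℝ) ^ ((N:ℕ):ℝ) * (a ^ (α - (N:ℝ)) * a ^ ((N:ℕ):ℝ)) := by ring
              _ = (2:ℝ) ^ ((N:ℕ):ℝ) * a ^ α := by rw [e3]
              _ = ε ^ α * (2:ℝ) ^ (N:ℝ) * ((2:ℝ) ^ (-α)) ^ (k+1) := by rw [e4]; ring
          rw [key]
          have hle : ((2:ℝ) ^ (-α)) ^ (k+1) ≤ ((2:ℝ) ^ (-α)) ^ k :=
            pow_le_pow_of_le_one h2neg.le
              (Real.rpow_le_one_of_one_le_of_nonpos one_le_two (by linarith)) (Nat.le_succ k)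
          have : (0:ℝ) ≤ ε ^ α * (2:ℝ) ^ (N:ℝ) := by positivity
          nlinarith [this, hle]
      _ = (ENNReal.ofReal (ε ^ α) * ENNReal.ofReal ((2:ℝ) ^ (N:ℝ)) * c) * q ^ k := by
          rw [ENNReal.ofReal_mul (by positivity), ENNReal.ofReal_mul (by positivity),
            ENNReal.ofReal_pow (Real.rpow_pos_of_pos two_pos (-α)).le]
          ring
  calc ∫⁻ z in Metric.ball (0:Euc N) ε, ENNReal.ofReal (‖z‖ ^ (α - (N:ℝ)))
      ≤ ∫⁻ z in ({0} ∪ ⋃ k, A k : Set (Euc N)), ENNReal.ofReal (‖z‖ ^ (α - (N:ℝ))) :=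
        lintegral_mono_set hcover
    _ ≤ (∫⁻ z in ({0} : Set (Euc N)), ENNReal.ofReal (‖z‖ ^ (α - (N:ℝ))))
        + ∫⁻ z in (⋃ k, A k), ENNReal.ofReal (‖z‖ ^ (α - (N:ℝ))) := lintegral_union_le _ _ _
    _ = ∫⁻ z in (⋃ k, A k), ENNReal.ofReal (‖z‖ ^ (α - (N:ℝ))) := by
        rw [setLIntegral_measure_zero _ _ (measure_singleton _), zero_add]
    _ ≤ ∑' k, ∫⁻ z in A k, ENNReal.ofReal (‖z‖ ^ (α - (N:ℝ))) := lintegral_iUnion_le _ _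
    _ ≤ ∑' k, (ENNReal.ofReal (ε ^ α) * ENNReal.ofReal ((2:ℝ) ^ (N:ℝ)) * c) * q ^ k :=
        ENNReal.tsum_le_tsum hannulus
    _ = (ENNReal.ofReal (ε ^ α) * ENNReal.ofReal ((2:ℝ) ^ (N:ℝ)) * c) * (1 - q)⁻¹ := by
        rw [ENNReal.tsum_mul_left, ENNReal.tsum_geometric]
    _ = ENNReal.ofReal (ε ^ α) * (ENNReal.ofReal ((2:ℝ) ^ (N:ℝ)) * (1 - q)⁻¹ * c) := by ring

end AuxLemmas

/-- local vanishing plus uniform bounds kill the Riesz potential a.e. -/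
theorem stmt_7 {N : ℕ} (hN : 1 ≤ N) (α s : ℝ) (hα0 : 0 < α) (hαN : α < N)
    (hs1 : 1 < s) (hsN : s < (N : ℝ) / α)
    (g : ℕ → Euc N → ℝ)
    (hg1 : ∀ n, Integrable (g n) volume)
    (hgs : ∀ n, MemLp (g n) (ENNReal.ofReal s) volume)
    (hb1 : ∃ M : ℝ≥0∞, M < ⊤ ∧ ∀ n, eLpNorm (g n) 1 volume ≤ M)
    (hbs : ∃ M : ℝ≥0∞, M < ⊤ ∧ ∀ n, eLpNorm (g n) (ENNReal.ofReal s) volume ≤ M)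
    (hloc : ∀ Ω : Set (Euc N), IsOpen Ω → IsBounded Ω →
      Tendsto (fun n => eLpNorm (g n) (ENNReal.ofReal s) (volume.restrict Ω)) atTop (𝓝 0)) :
    ∃ σ : ℕ → ℕ, StrictMono σ ∧
      ∀ᵐ x : Euc N ∂volume, Tendsto (fun n => riesz N α (g (σ n)) x) atTop (𝓝 0) := by
  classical
  obtain ⟨M₁, hM₁top, hM₁⟩ := hb1
  have hgae : ∀ n, AEMeasurable (g n) volume := fun n =>
    (hg1 n).aestronglyMeasurable.aemeasurable
  set G : ℕ → Euc N → ℝ := fun n => (hgae n).mk (g n) with hG_def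
  have hGmeas : ∀ n, Measurable (G n) := fun n => (hgae n).measurable_mk
  have hge : ∀ n, g n =ᵐ[volume] G n := fun n => (hgae n).ae_eq_mk
  set J : ℕ → Euc N → ℝ≥0∞ := fun n x =>
    ∫⁻ y, (‖G n y‖₊ : ℝ≥0∞) * ENNReal.ofReal (‖x - y‖ ^ (α - (N:ℝ))) with hJ_def
  have hKmeas : Measurable (fun p : Euc N × Euc N =>
      ENNReal.ofReal (‖p.1 - p.2‖ ^ (α - (N:ℝ)))) := by fun_prop
  have hprodmeas : ∀ n, Measurable (fun p : Euc N × Euc N =>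
      (‖G n p.2‖₊ : ℝ≥0∞) * ENNReal.ofReal (‖p.1 - p.2‖ ^ (α - (N:ℝ)))) := by
    intro n
    exact (((hGmeas n).comp measurable_snd).nnnorm.coe_nnreal_ennreal).mul hKmeas
  have hJmeas : ∀ n, Measurable (J n) := fun n =>
    Measurable.lintegral_prod_right' (hprodmeas n)
  -- lintegral of the norm of the integrand equals J
  have hnorm_eq : ∀ n x,
      (∫⁻ y, ENNReal.ofReal ‖g n y / ‖x - y‖ ^ ((N:ℝ) - α)‖) = J n x := by
    intro n x
    refine lintegral_congr_ae ?_
    filter_upwards [hge n] with y hy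
    rw [hy]
    set r : ℝ := ‖x - y‖ with hr_def
    have hr0 : 0 ≤ r := norm_nonneg _
    rcases eq_or_lt_of_le hr0 with h0 | hpos
    · rw [← h0]
      rw [Real.zero_rpow (by linarith : (N:ℝ) - α ≠ 0), div_zero,
        Real.zero_rpow (by intro h; apply absurd h; intro h'; linarith [sub_eq_zero.mp h'] : α - (N:ℝ) ≠ 0)]
      simp
    · have hrpow : (0:ℝ) < r ^ ((N:ℝ) - α) := Real.rpow_pos_of_pos hpos _
      have key : ‖G n y / r ^ ((N:ℝ) - α)‖ = |G n y| * r ^ (α - (N:ℝ)) := by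
        rw [Real.norm_eq_abs, abs_div, abs_of_pos hrpow, div_eq_mul_inv]
        congr 1
        rw [← Real.rpow_neg hr0]
        · ring_nf
      rw [key, ENNReal.ofReal_mul (abs_nonneg _), ← Real.enorm_eq_ofReal_abs, enorm_eq_nnnorm]
  -- pointwise domination
  have hdom : ∀ n x, ‖riesz N α (g n) x‖ ≤ |rieszA N α| * (J n x).toReal := by
    intro n x
    rw [riesz, norm_mul, Real.norm_eq_abs (rieszA N α)]
    refine mul_le_mul_of_nonneg_left ?_ (abs_nonneg _)
    by_cases hfin : J n x = ⊤
    · have hnint : ¬ Integrable (fun y => g n y / ‖x - y‖ ^ ((N:ℝ) - α)) volume := by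
        intro hint
        have h2 := hint.2
        rw [hasFiniteIntegral_iff_norm] at h2
        rw [hnorm_eq n x, hfin] at h2
        exact absurd h2 (lt_irrefl _)
      rw [integral_undef hnint]
      simp
    · calc ‖∫ y, g n y / ‖x - y‖ ^ ((N:ℝ) - α)‖
          ≤ (∫⁻ y, ENNReal.ofReal ‖g n y / ‖x - y‖ ^ ((N:ℝ) - α)‖).toReal :=
            norm_integral_le_lintegral_norm _
        _ = (J n x).toReal := by rw [hnorm_eq]
  -- uniform L¹ bound for G
  have hF1 : ∀ n, ∫⁻ y, (‖G n y‖₊ : ℝ≥0∞) ≤ M₁ := by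
    intro n
    have : ∫⁻ y, (‖G n y‖₊ : ℝ≥0∞) = ∫⁻ y, (‖g n y‖₊ : ℝ≥0∞) := by
      refine lintegral_congr_ae ?_
      filter_upwards [hge n] with y hy
      rw [hy]
    rw [this]; simp only [← enorm_eq_nnnorm, ← eLpNorm_one_eq_lintegral_enorm]
    exact hM₁ n
  -- KEY: local lintegral of J tends to zero
  have hkey : ∀ R : ℝ, 0 < R →
      Tendsto (fun n => ∫⁻ x in Metric.ball (0:Euc N) R, J n x) atTop (𝓝 0) := by
    intro R hR
    obtain ⟨C, hCtop, hC⟩ := ker_ball hN hα0 hαN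
    rw [ENNReal.tendsto_nhds_zero]
    intro ε hε
    have hε3 : (0:ℝ≥0∞) < ε / 3 := ENNReal.div_pos hε.ne' (by norm_num)
    have hvolR : volume (Metric.ball (0:Euc N) R) ≠ ⊤ := measure_ball_lt_top.ne
    obtain ⟨δ₁, hδ₁, hδ₁lt⟩ := exists_ofReal_mul_lt
      (volume (Metric.ball (0:Euc N) R) * M₁) (ε/3)
      (ENNReal.mul_ne_top hvolR hM₁top.ne) hε3
    set R' : ℝ := max 1 (δ₁ ^ (α - (N:ℝ))⁻¹) with hR'_def
    have hR'1 : (1:ℝ) ≤ R' := le_max_left _ _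
    have hR'pos : (0:ℝ) < R' := lt_of_lt_of_le one_pos hR'1
    have hαN' : α - (N:ℝ) < 0 := by linarith
    have hR'bound : ENNReal.ofReal (R' ^ (α - (N:ℝ))) ≤ ENNReal.ofReal δ₁ := by
      apply ENNReal.ofReal_le_ofReal
      have hinvpos : 0 < δ₁ ^ (α - (N:ℝ))⁻¹ := Real.rpow_pos_of_pos hδ₁ _
      calc R' ^ (α - (N:ℝ)) ≤ (δ₁ ^ (α - (N:ℝ))⁻¹) ^ (α - (N:ℝ)) :=
            Real.rpow_le_rpow_of_nonpos hinvpos (le_max_right _ _) hαN'.le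
        _ = δ₁ := Real.rpow_inv_rpow hδ₁.le hαN'.ne
    obtain ⟨δ₂, hδ₂, hδ₂lt⟩ := exists_ofReal_mul_lt (C * M₁) (ε/3)
      (ENNReal.mul_ne_top hCtop hM₁top.ne) hε3
    set ε₀ : ℝ := min 1 (δ₂ ^ α⁻¹) with hε₀_def
    have hε₀pos : 0 < ε₀ := lt_min one_pos (Real.rpow_pos_of_pos hδ₂ _)
    have hε₀R' : ε₀ ≤ R' := le_trans (min_le_left _ _) hR'1
    have hε₀bound : ENNReal.ofReal (ε₀ ^ α) ≤ ENNReal.ofReal δ₂ := by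
      apply ENNReal.ofReal_le_ofReal
      calc ε₀ ^ α ≤ (δ₂ ^ α⁻¹) ^ α :=
            Real.rpow_le_rpow hε₀pos.le (min_le_right _ _) hα0.le
        _ = δ₂ := Real.rpow_inv_rpow hδ₂.le hα0.ne'
    -- the three regions
    set φ : ℕ → Euc N × Euc N → ℝ≥0∞ := fun n p =>
      (‖G n p.2‖₊ : ℝ≥0∞) * ENNReal.ofReal (‖p.1 - p.2‖ ^ (α - (N:ℝ))) with hφ_def
    have hφmeas : ∀ n, Measurable (φ n) := hprodmeas
    have hdm : Measurable (fun p : Euc N × Euc N => dist p.2 p.1) :=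
      (continuous_snd.dist continuous_fst).measurable
    set U₁ : Set (Euc N × Euc N) := {p | dist p.2 p.1 < ε₀} with hU₁_def
    set U₂ : Set (Euc N × Euc N) := {p | ε₀ ≤ dist p.2 p.1 ∧ dist p.2 p.1 < R'} with hU₂_def
    set U₃ : Set (Euc N × Euc N) := {p | R' ≤ dist p.2 p.1} with hU₃_def
    have hU₁ : MeasurableSet U₁ := hdm measurableSet_Iio
    have hU₂ : MeasurableSet U₂ := hdm measurableSet_Ico
    have hU₃ : MeasurableSet U₃ := hdm measurableSet_Ici
    have hcover : ∀ n p, φ n p ≤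
        U₁.indicator (φ n) p + U₂.indicator (φ n) p + U₃.indicator (φ n) p := by
      intro n p
      by_cases h1 : dist p.2 p.1 < ε₀
      · rw [Set.indicator_of_mem (show p ∈ U₁ from h1)]
        exact le_add_right le_self_add
      by_cases h2 : dist p.2 p.1 < R'
      · rw [Set.indicator_of_mem (show p ∈ U₂ from ⟨not_lt.mp h1, h2⟩)]
        exact le_add_right le_add_self
      · rw [Set.indicator_of_mem (show p ∈ U₃ from not_lt.mp h2)]
        exact le_add_self
    have hA₁meas : ∀ n, Measurable (fun x => ∫⁻ y, U₁.indicator (φ n) (x, y)) :=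
      fun n => Measurable.lintegral_prod_right' ((hφmeas n).indicator hU₁)
    have hA₂meas : ∀ n, Measurable (fun x => ∫⁻ y, U₂.indicator (φ n) (x, y)) :=
      fun n => Measurable.lintegral_prod_right' ((hφmeas n).indicator hU₂)
    have hA₃meas : ∀ n, Measurable (fun x => ∫⁻ y, U₃.indicator (φ n) (x, y)) :=
      fun n => Measurable.lintegral_prod_right' ((hφmeas n).indicator hU₃)
    have hsplit : ∀ n, (∫⁻ x in Metric.ball (0:Euc N) R, J n x) ≤
        (∫⁻ x in Metric.ball (0:Euc N) R, ∫⁻ y, U₁.indicator (φ n) (x, y))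
        + (∫⁻ x in Metric.ball (0:Euc N) R, ∫⁻ y, U₂.indicator (φ n) (x, y))
        + (∫⁻ x in Metric.ball (0:Euc N) R, ∫⁻ y, U₃.indicator (φ n) (x, y)) := by
      intro n
      have hle : ∀ x, J n x ≤ (∫⁻ y, U₁.indicator (φ n) (x, y))
          + (∫⁻ y, U₂.indicator (φ n) (x, y)) + (∫⁻ y, U₃.indicator (φ n) (x, y)) := by
        intro x
        have h0 : J n x = ∫⁻ y, φ n (x, y) := rfl
        rw [h0]
        calc ∫⁻ y, φ n (x, y)
            ≤ ∫⁻ y, (U₁.indicator (φ n) (x, y) + U₂.indicator (φ n) (x, y)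
                + U₃.indicator (φ n) (x, y)) := lintegral_mono (fun y => hcover n (x, y))
          _ = _ := by
              have m1 : Measurable (fun y => U₁.indicator (φ n) (x, y)) :=
                ((hφmeas n).indicator hU₁).comp measurable_prodMk_left
              have m2 : Measurable (fun y => U₂.indicator (φ n) (x, y)) :=
                ((hφmeas n).indicator hU₂).comp measurable_prodMk_left
              rw [lintegral_add_left (show Measurable (fun y => U₁.indicator (φ n) (x, y) + U₂.indicator (φ n) (x, y)) from m1.add m2), lintegral_add_left m1]
      calc (∫⁻ x in Metric.ball (0:Euc N) R, J n x)
          ≤ ∫⁻ x in Metric.ball (0:Euc N) R, ((∫⁻ y, U₁.indicator (φ n) (x, y))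
            + (∫⁻ y, U₂.indicator (φ n) (x, y)) + (∫⁻ y, U₃.indicator (φ n) (x, y))) :=
            lintegral_mono hle
        _ = _ := by
            rw [lintegral_add_left (show Measurable (fun x => (∫⁻ y, U₁.indicator (φ n) (x, y)) + ∫⁻ y, U₂.indicator (φ n) (x, y)) from (hA₁meas n).add (hA₂meas n)),
              lintegral_add_left (hA₁meas n)]
    -- NEAR
    have hnear : ∀ n, (∫⁻ x in Metric.ball (0:Euc N) R, ∫⁻ y, U₁.indicator (φ n) (x, y))
        ≤ ENNReal.ofReal δ₂ * (C * M₁) := by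
      intro n
      have hsw : AEMeasurable (Function.uncurry (fun x y => U₁.indicator (φ n) (x, y)))
          ((volume.restrict (Metric.ball (0:Euc N) R)).prod volume) :=
        ((hφmeas n).indicator hU₁).aemeasurable
      rw [lintegral_lintegral_swap hsw]
      have hinner : ∀ y, (∫⁻ x in Metric.ball (0:Euc N) R, U₁.indicator (φ n) (x, y))
          ≤ (‖G n y‖₊ : ℝ≥0∞) * (ENNReal.ofReal (ε₀ ^ α) * C) := by
        intro y
        calc (∫⁻ x in Metric.ball (0:Euc N) R, U₁.indicator (φ n) (x, y))
            ≤ ∫⁻ x, U₁.indicator (φ n) (x, y) := setLIntegral_le_lintegral _ _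
          _ = ∫⁻ x in Metric.ball y ε₀, φ n (x, y) := by
              rw [← lintegral_indicator measurableSet_ball]
              refine lintegral_congr (fun x => ?_)
              by_cases hxy : dist x y < ε₀
              · rw [Set.indicator_of_mem (by rw [hU₁_def]; exact (by
                    simpa [dist_comm] using hxy : dist ((x,y):Euc N × Euc N).2 (x,y).1 < ε₀)),
                  Set.indicator_of_mem (Metric.mem_ball.mpr hxy)]
              · rw [Set.indicator_of_notMem (by
                    simp only [hU₁_def, Set.mem_setOf_eq, dist_comm y x]
                    exact hxy),
                  Set.indicator_of_notMem (fun hm => hxy (Metric.mem_ball.mp hm))]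
          _ = (‖G n y‖₊ : ℝ≥0∞) *
              ∫⁻ x in Metric.ball y ε₀, ENNReal.ofReal (‖x - y‖ ^ (α - (N:ℝ))) := by
              have hker : Measurable (fun x : Euc N =>
                  ENNReal.ofReal (‖x - y‖ ^ (α - (N:ℝ)))) := by fun_prop
              exact lintegral_const_mul ((‖G n y‖₊ : ℝ≥0∞)) hker
          _ ≤ (‖G n y‖₊ : ℝ≥0∞) * (ENNReal.ofReal (ε₀ ^ α) * C) := by
              refine mul_le_mul_right ?_ _
              rw [ker_translate]
              exact hC ε₀ hε₀pos
      calc (∫⁻ y, ∫⁻ x in Metric.ball (0:Euc N) R, U₁.indicator (φ n) (x, y))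
          ≤ ∫⁻ y, (‖G n y‖₊ : ℝ≥0∞) * (ENNReal.ofReal (ε₀ ^ α) * C) := lintegral_mono hinner
        _ = (∫⁻ y, (‖G n y‖₊ : ℝ≥0∞)) * (ENNReal.ofReal (ε₀ ^ α) * C) :=
            lintegral_mul_const _ ((hGmeas n).nnnorm.coe_nnreal_ennreal)
        _ ≤ M₁ * (ENNReal.ofReal δ₂ * C) :=
            mul_le_mul' (hF1 n) (mul_le_mul_left hε₀bound C)
        _ = ENNReal.ofReal δ₂ * (C * M₁) := by ring
    -- FAR
    have hfar : ∀ n, (∫⁻ x in Metric.ball (0:Euc N) R, ∫⁻ y, U₃.indicator (φ n) (x, y))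
        ≤ ENNReal.ofReal δ₁ * (volume (Metric.ball (0:Euc N) R) * M₁) := by
      intro n
      have hptwise : ∀ x : Euc N, (∫⁻ y, U₃.indicator (φ n) (x, y))
          ≤ ENNReal.ofReal δ₁ * M₁ := by
        intro x
        have hbnd : ∀ y, U₃.indicator (φ n) (x, y)
            ≤ (‖G n y‖₊ : ℝ≥0∞) * ENNReal.ofReal δ₁ := by
          intro y
          by_cases hm : (x, y) ∈ U₃
          · rw [Set.indicator_of_mem hm, hφ_def]
            refine mul_le_mul_right (le_trans (ENNReal.ofReal_le_ofReal ?_) hR'bound) _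
            have hdist : R' ≤ ‖x - y‖ := by
              have := hm
              rw [hU₃_def] at this
              simpa [dist_eq_norm, norm_sub_rev] using this
            exact Real.rpow_le_rpow_of_nonpos hR'pos hdist hαN'.le
          · rw [Set.indicator_of_notMem hm]; exact zero_le
        calc (∫⁻ y, U₃.indicator (φ n) (x, y))
            ≤ ∫⁻ y, (‖G n y‖₊ : ℝ≥0∞) * ENNReal.ofReal δ₁ := lintegral_mono hbnd
          _ = (∫⁻ y, (‖G n y‖₊ : ℝ≥0∞)) * ENNReal.ofReal δ₁ :=
              lintegral_mul_const _ ((hGmeas n).nnnorm.coe_nnreal_ennreal)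
          _ ≤ M₁ * ENNReal.ofReal δ₁ := mul_le_mul_left (hF1 n) _
          _ = ENNReal.ofReal δ₁ * M₁ := mul_comm _ _
      calc (∫⁻ x in Metric.ball (0:Euc N) R, ∫⁻ y, U₃.indicator (φ n) (x, y))
          ≤ ∫⁻ _ in Metric.ball (0:Euc N) R, (ENNReal.ofReal δ₁ * M₁) :=
            setLIntegral_mono' measurableSet_ball (fun x _ => hptwise x)
        _ = (ENNReal.ofReal δ₁ * M₁) * volume (Metric.ball (0:Euc N) R) :=
            setLIntegral_const _ _
        _ = ENNReal.ofReal δ₁ * (volume (Metric.ball (0:Euc N) R) * M₁) := by ring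
    -- MID
    have hmid : ∀ n, (∫⁻ x in Metric.ball (0:Euc N) R, ∫⁻ y, U₂.indicator (φ n) (x, y))
        ≤ (volume (Metric.ball (0:Euc N) R) * ENNReal.ofReal (ε₀ ^ (α - (N:ℝ))))
          * ∫⁻ y in Metric.ball (0:Euc N) (R + R'), (‖G n y‖₊ : ℝ≥0∞) := by
      intro n
      have hptwise : ∀ x ∈ Metric.ball (0:Euc N) R, (∫⁻ y, U₂.indicator (φ n) (x, y))
          ≤ ENNReal.ofReal (ε₀ ^ (α - (N:ℝ)))
            * ∫⁻ y in Metric.ball (0:Euc N) (R + R'), (‖G n y‖₊ : ℝ≥0∞) := by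
        intro x hx
        have hbnd : ∀ y, U₂.indicator (φ n) (x, y)
            ≤ (Metric.ball (0:Euc N) (R + R')).indicator
                (fun y => (‖G n y‖₊ : ℝ≥0∞)) y * ENNReal.ofReal (ε₀ ^ (α - (N:ℝ))) := by
          intro y
          by_cases hm : (x, y) ∈ U₂
          · have hm' := hm
            rw [hU₂_def] at hm'
            obtain ⟨hm1, hm2⟩ := hm'
            have hyball : y ∈ Metric.ball (0:Euc N) (R + R') := by
              rw [Metric.mem_ball]
              calc dist y 0 ≤ dist y x + dist x 0 := dist_triangle _ _ _
                _ < R' + R := add_lt_add hm2 (Metric.mem_ball.mp hx)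
                _ = R + R' := add_comm _ _
            rw [Set.indicator_of_mem hm, Set.indicator_of_mem hyball, hφ_def]
            refine mul_le_mul_right (ENNReal.ofReal_le_ofReal ?_) _
            have hdist : ε₀ ≤ ‖x - y‖ := by
              simpa [dist_eq_norm, norm_sub_rev] using hm1
            exact Real.rpow_le_rpow_of_nonpos hε₀pos hdist hαN'.le
          · rw [Set.indicator_of_notMem hm]; exact zero_le
        calc (∫⁻ y, U₂.indicator (φ n) (x, y))
            ≤ ∫⁻ y, (Metric.ball (0:Euc N) (R + R')).indicator
                (fun y => (‖G n y‖₊ : ℝ≥0∞)) y * ENNReal.ofReal (ε₀ ^ (α - (N:ℝ))) :=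
              lintegral_mono hbnd
          _ = (∫⁻ y, (Metric.ball (0:Euc N) (R + R')).indicator
                (fun y => (‖G n y‖₊ : ℝ≥0∞)) y) * ENNReal.ofReal (ε₀ ^ (α - (N:ℝ))) :=
              lintegral_mul_const _
                (((hGmeas n).nnnorm.coe_nnreal_ennreal).indicator measurableSet_ball)
          _ = (∫⁻ y in Metric.ball (0:Euc N) (R + R'), (‖G n y‖₊ : ℝ≥0∞))
                * ENNReal.ofReal (ε₀ ^ (α - (N:ℝ))) := by
              rw [lintegral_indicator measurableSet_ball]
          _ = ENNReal.ofReal (ε₀ ^ (α - (N:ℝ)))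
                * ∫⁻ y in Metric.ball (0:Euc N) (R + R'), (‖G n y‖₊ : ℝ≥0∞) := mul_comm _ _
      calc (∫⁻ x in Metric.ball (0:Euc N) R, ∫⁻ y, U₂.indicator (φ n) (x, y))
          ≤ ∫⁻ _ in Metric.ball (0:Euc N) R, (ENNReal.ofReal (ε₀ ^ (α - (N:ℝ)))
              * ∫⁻ y in Metric.ball (0:Euc N) (R + R'), (‖G n y‖₊ : ℝ≥0∞)) :=
            setLIntegral_mono' measurableSet_ball hptwise
        _ = (ENNReal.ofReal (ε₀ ^ (α - (N:ℝ)))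
              * ∫⁻ y in Metric.ball (0:Euc N) (R + R'), (‖G n y‖₊ : ℝ≥0∞))
              * volume (Metric.ball (0:Euc N) R) := setLIntegral_const _ _
        _ = _ := by ring
    -- MID tends to zero
    have hL1 : Tendsto (fun n => ∫⁻ y in Metric.ball (0:Euc N) (R + R'),
        (‖G n y‖₊ : ℝ≥0∞)) atTop (𝓝 0) := by
      set Ω := Metric.ball (0:Euc N) (R + R') with hΩ_def
      have hvolΩ : volume Ω ≠ ⊤ := measure_ball_lt_top.ne
      have hexp : (0:ℝ) ≤ 1 - 1/s := by
        have : 1/s ≤ 1 := by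
          rw [div_le_one (by linarith)]; linarith
        linarith
      have hbound : ∀ n, (∫⁻ y in Ω, (‖G n y‖₊ : ℝ≥0∞))
          ≤ eLpNorm (g n) (ENNReal.ofReal s) (volume.restrict Ω)
            * (volume Ω) ^ (1 - 1/s) := by
        intro n
        have h1 : (∫⁻ y in Ω, (‖G n y‖₊ : ℝ≥0∞)) = eLpNorm (g n) 1 (volume.restrict Ω) := by
          rw [eLpNorm_one_eq_lintegral_enorm]
          refine lintegral_congr_ae ?_
          filter_upwards [ae_restrict_of_ae (hge n)] with y hy
          rw [hy, enorm_eq_nnnorm]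
        rw [h1]
        have h2 := eLpNorm_le_eLpNorm_mul_rpow_measure_univ (μ := volume.restrict Ω)
          (p := 1) (q := ENNReal.ofReal s)
          (ENNReal.one_le_ofReal.mpr hs1.le) ((hg1 n).aestronglyMeasurable.restrict)
        have h3 : (1:ℝ)/(1:ℝ≥0∞).toReal - 1/(ENNReal.ofReal s).toReal = 1 - 1/s := by
          rw [ENNReal.toReal_one, ENNReal.toReal_ofReal (by linarith)]
          norm_num
        rw [h3, Measure.restrict_apply_univ] at h2
        exact h2
      have hpow : (volume Ω) ^ (1 - 1/s) ≠ ⊤ := ENNReal.rpow_ne_top_of_nonneg hexp hvolΩ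
      have hmul := ENNReal.Tendsto.mul_const
        (hloc Ω Metric.isOpen_ball Metric.isBounded_ball) (Or.inr hpow)
      rw [zero_mul] at hmul
      exact tendsto_of_tendsto_of_tendsto_of_le_of_le tendsto_const_nhds hmul
        (fun n => zero_le) hbound
    have hconst : volume (Metric.ball (0:Euc N) R) * ENNReal.ofReal (ε₀ ^ (α - (N:ℝ))) ≠ ⊤ :=
      ENNReal.mul_ne_top hvolR ENNReal.ofReal_ne_top
    have hmid0 := ENNReal.Tendsto.const_mul hL1 (Or.inr hconst)
    rw [mul_zero] at hmid0
    filter_upwards [ENNReal.tendsto_nhds_zero.mp hmid0 (ε/3) hε3] with n hn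
    calc (∫⁻ x in Metric.ball (0:Euc N) R, J n x)
        ≤ _ := hsplit n
      _ ≤ ε/3 + ε/3 + ε/3 :=
          add_le_add (add_le_add ((hnear n).trans hδ₂lt.le) ((hmid n).trans hn))
            ((hfar n).trans hδ₁lt.le)
      _ = ε := ENNReal.add_thirds ε
  -- extraction
  have hhalf : ∀ n : ℕ, (0:ℝ≥0∞) < 2⁻¹ ^ n :=
    fun n => zero_lt_iff.mpr (ENNReal.pow_ne_zero (by simp) n)
  obtain ⟨σ, hσmono, hσ⟩ := extraction_forall_of_eventually
    (P := fun n m => ∫⁻ x in Metric.ball (0:Euc N) ((n:ℝ)+1), J m x ≤ 2⁻¹ ^ n)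
    (fun n => (ENNReal.tendsto_nhds_zero.mp (hkey ((n:ℝ)+1) (by positivity)) _ (hhalf n)))
  refine ⟨σ, hσmono, ?_⟩
  -- Borel-Cantelli style argument
  set h : ℕ → Euc N → ℝ≥0∞ := fun n =>
    (Metric.ball (0:Euc N) ((n:ℝ)+1)).indicator (J (σ n)) with hh_def
  have hhmeas : ∀ n, Measurable (h n) := fun n =>
    (hJmeas (σ n)).indicator measurableSet_ball
  have hb : ∀ n, (∫⁻ x, h n x) ≤ 2⁻¹ ^ n := by
    intro n
    rw [hh_def]
    simp only [lintegral_indicator measurableSet_ball]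
    exact hσ n
  have hsum : (∫⁻ x, ∑' n, h n x) ≠ ⊤ := by
    rw [lintegral_tsum (fun n => (hhmeas n).aemeasurable)]
    refine ne_top_of_le_ne_top ?_ (ENNReal.tsum_le_tsum hb)
    rw [ENNReal.tsum_geometric]
    exact ENNReal.inv_ne_top.mpr (by
      rw [ne_eq, tsub_eq_zero_iff_le]
      norm_num)
  have hae : ∀ᵐ x : Euc N ∂volume, (∑' n, h n x) ≠ ⊤ := by
    filter_upwards [ae_lt_top (Measurable.ennreal_tsum hhmeas) hsum] with x hx
    exact hx.ne
  filter_upwards [hae] with x hx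
  have hterm : Tendsto (fun n => h n x) atTop (𝓝 0) :=
    ENNReal.tendsto_atTop_zero_of_tsum_ne_top hx
  have hJx : Tendsto (fun n => J (σ n) x) atTop (𝓝 0) := by
    refine hterm.congr' ?_
    filter_upwards [eventually_ge_atTop ⌈‖x‖⌉₊] with n hn
    rw [hh_def]
    simp only
    rw [Set.indicator_of_mem]
    rw [mem_ball_zero_iff]
    calc ‖x‖ ≤ (⌈‖x‖⌉₊ : ℝ) := Nat.le_ceil _
      _ ≤ (n:ℝ) := by exact_mod_cast hn
      _ < (n:ℝ) + 1 := by linarith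
  have hJxr : Tendsto (fun n => (J (σ n) x).toReal) atTop (𝓝 0) := by
    have := (ENNReal.tendsto_toReal (by simp : (0:ℝ≥0∞) ≠ ⊤)).comp hJx
    rw [ENNReal.toReal_zero] at this
    exact this
  refine squeeze_zero_norm (fun n => hdom (σ n) x) ?_
  have := hJxr.const_mul |rieszA N α|
  simpa using this
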